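/- arXiv:2509.24280 — 3 statements merged into one kernel-verified Lean document; each statement's English description precedes it below -/
import Mathlib

section
/- Let C : Fin m → Fin 3 → (Fin n × Bool) be a 3CNF with m clauses over n variables, and let G be its associated simple graph on vertex set Fin m × Fin 3. Then there exists an assignment σ : Fin n → Bool satisfying every clause (i.e., for every i ∈ Fin m there is a ∈ Fin 3 such that the literal C i a is true under σ) if and only if G contains a clique of cardinality m. -/
open Finset

/-- Two literals (variable, sign) are contradictory iff they have the same variable
and opposite signs. -/
def Contradictory {n : ℕ} (l l' : Fin n × Bool) : Prop :=
  l.1 = l'.1 ∧ l.2 ≠ l'.2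

/-- The simple graph associated to a 3CNF `C` with `m` clauses over `n` variables:
vertices are clause/position pairs, and `(i,a)` is adjacent to `(j,b)` iff `i ≠ j`
and the literals `C i a` and `C j b` are not contradictory. -/
def satGraph {m n : ℕ} (C : Fin m → Fin 3 → Fin n × Bool) :
    SimpleGraph (Fin m × Fin 3) where
  Adj v w := v.1 ≠ w.1 ∧ ¬ Contradictory (C v.1 v.2) (C w.1 w.2)
  symm := by
    constructor
    rintro v w ⟨h1, h2⟩
    exact ⟨h1.symm, fun ⟨he, hs⟩ => h2 ⟨he.symm, hs.symm⟩⟩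
  loopless := by
    constructor
    rintro v ⟨h1, -⟩
    exact h1 rfl

/-
An assignment satisfying every clause picks a true literal in each clause; true literals are
never contradictory, so these picks form an `m`-clique. Conversely, the vertices of an `m`-clique
lie in distinct clauses, hence pick one literal from every clause, and pairwise non-contradictory
literals are made true simultaneously by setting a variable to `true` exactly when it occurs
positively among them.
-/

theorem not_contradictory_of_eval_eq {n : ℕ} {σ : Fin n → Bool} {l l' : Fin n × Bool}
    (hl : σ l.1 = l.2) (hl' : σ l'.1 = l'.2) : ¬ Contradictory l l' :=
  fun ⟨hvar, hsign⟩ => hsign (by rw [← hl, ← hl', hvar])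

theorem exists_eval_eq_of_pairwise_not_contradictory {ι : Type*} {n : ℕ}
    (ℓ : ι → Fin n × Bool) (hℓ : Pairwise fun i j => ¬ Contradictory (ℓ i) (ℓ j)) :
    ∃ σ : Fin n → Bool, ∀ i, σ (ℓ i).1 = (ℓ i).2 := by
  classical
  refine ⟨fun v => decide (∃ j, ℓ j = (v, true)), fun i => ?_⟩
  cases hsign : (ℓ i).2
  · simp only [decide_eq_false_iff_not, not_exists]
    intro j hj
    have hji : j ≠ i := by
      rintro rfl
      simpa [hsign] using congrArg Prod.snd hj
    exact hℓ hji ⟨by rw [hj], by simp [hj, hsign]⟩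
  · exact decide_eq_true ⟨i, Prod.ext rfl hsign⟩

theorem exists_mem_of_injOn_fst_of_card_eq {ι β : Type*} [Fintype ι] [DecidableEq ι]
    {S : Finset (ι × β)} (hinj : Set.InjOn Prod.fst (S : Set (ι × β)))
    (hcard : #S = Fintype.card ι) (i : ι) :
    ∃ b, (i, b) ∈ S := by
  have himage : S.image Prod.fst = univ :=
    eq_univ_of_card _ (by rw [card_image_of_injOn hinj, hcard])
  obtain ⟨v, hv, rfl⟩ := mem_image.mp (himage ▸ mem_univ i)
  exact ⟨v.2, hv⟩

section satGraph

variable {m n : ℕ} (C : Fin m → Fin 3 → Fin n × Bool)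

theorem isNClique_satGraph_image_of_eval_eq (σ : Fin n → Bool) (a : Fin m → Fin 3)
    (ha : ∀ i, σ (C i (a i)).1 = (C i (a i)).2) :
    (satGraph C).IsNClique m (univ.image fun i => (i, a i)) := by
  have hinj : Function.Injective fun i => (i, a i) := fun i j h => congrArg Prod.fst h
  refine ⟨?_, by rw [card_image_of_injective _ hinj, card_univ, Fintype.card_fin]⟩
  rw [coe_image, coe_univ, Set.image_univ]
  rintro _ ⟨i, rfl⟩ _ ⟨j, rfl⟩ hne
  exact ⟨fun hij => hne (by simp only at hij; rw [hij]),
    not_contradictory_of_eval_eq (ha i) (ha j)⟩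

variable {C} in
theorem exists_mem_of_isNClique_satGraph {S : Finset (Fin m × Fin 3)}
    (hS : (satGraph C).IsNClique m S) :
    ∃ a : Fin m → Fin 3, ∀ i, (i, a i) ∈ S := by
  have hinj : Set.InjOn Prod.fst (S : Set (Fin m × Fin 3)) := fun v hv w hw h =>
    by_contra fun hne => (hS.isClique hv hw hne).1 h
  choose a ha using
    exists_mem_of_injOn_fst_of_card_eq hinj (by rw [hS.card_eq, Fintype.card_fin])
  exact ⟨a, ha⟩

end satGraph

/-- A 3CNF is satisfiable iff its associated graph contains a clique of
cardinality `m`. -/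
theorem sat_iff_clique {m n : ℕ} (C : Fin m → Fin 3 → Fin n × Bool) :
    (∃ σ : Fin n → Bool, ∀ i : Fin m, ∃ a : Fin 3, σ (C i a).1 = (C i a).2) ↔
    (∃ S : Finset (Fin m × Fin 3), (satGraph C).IsNClique m S) := by
  constructor
  · rintro ⟨σ, hσ⟩
    choose a ha using hσ
    exact ⟨_, isNClique_satGraph_image_of_eval_eq C σ a ha⟩
  · rintro ⟨S, hS⟩
    obtain ⟨a, ha⟩ := exists_mem_of_isNClique_satGraph hS
    have hpairwise : Pairwise fun i j => ¬ Contradictory (C i (a i)) (C j (a j)) :=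
      fun i j hij => (hS.isClique (ha i) (ha j) fun h => hij (congrArg Prod.fst h)).2
    obtain ⟨σ, hσ⟩ := exists_eval_eq_of_pairwise_not_contradictory _ hpairwise
    exact ⟨σ, fun i => ⟨a i, hσ i⟩⟩
end

section
/- Let G : ({0,1}³)^m → {0,1}^m be the blockwise Index map and let μ, ν be probability distributions on ({0,1}³)^m. Then for every natural number k, Δ_k(G#μ, G#ν) ≤ Δ_{2k}(μ, ν). Equivalently, with k' = ⌊k/2⌋, one has Δ_{k'}(G#μ, G#ν) ≤ Δ_k(μ, ν). -/
open MvPolynomial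

/-- Embed a Boolean point of the cube into `ℝ^ι`. -/
def boolToReal {ι : Type*} (x : ι → Bool) : ι → ℝ := fun i => if x i then 1 else 0

/-- Expectation of a real polynomial test under a distribution on the Boolean cube. -/
noncomputable def pmfExp {ι : Type*} [Fintype ι] [DecidableEq ι]
    (μ : PMF (ι → Bool)) (p : MvPolynomial ι ℝ) : ℝ :=
  ∑ x : ι → Bool, (μ x).toReal * eval (boolToReal x) p

/-- The degree-`k` test discrepancy between two distributions on the Boolean cube:
the supremum of `|E_μ[p] − E_ν[p]|` over real polynomials `p` of total degree ≤ `k`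
with `|p| ≤ 1` on the cube. -/
noncomputable def Deltak {ι : Type*} [Fintype ι] [DecidableEq ι]
    (k : ℕ) (μ ν : PMF (ι → Bool)) : ℝ :=
  sSup {d : ℝ | ∃ p : MvPolynomial ι ℝ, p.totalDegree ≤ k ∧
    (∀ x : ι → Bool, |eval (boolToReal x) p| ≤ 1) ∧
    d = |pmfExp μ p - pmfExp ν p|}

/-- The blockwise Index map on the Boolean cube: the `j`-th block is
`(u_j, v₀ⱼ, v₁ⱼ)` and the `j`-th output is `v₀ⱼ` if `u_j = 0` and `v₁ⱼ` if `u_j = 1`. -/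
def indexMapBool (m : ℕ) (x : Fin m × Fin 3 → Bool) : Fin m → Bool :=
  fun j => if x (j, 0) then x (j, 2) else x (j, 1)

/-!
Each output bit of the Index gadget is the quadratic polynomial `(1 - u) v₀ + u v₁` of its block.
Substituting these polynomials into a degree-`k` test on the outputs yields a degree-`2k` test on
the inputs that agrees with the original test composed with the Index map on the cube, so its
expectation under `μ` is the expectation of the original test under the pushforward of `μ`.
Hence every test witnessing the output discrepancy witnesses the same input discrepancy at
degree `2k`. The second claim is the first one at `⌊k/2⌋`, since `2⌊k/2⌋ ≤ k`.
-/

namespace PMF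

variable {ι κ : Type*} [Fintype ι] [Fintype κ] [DecidableEq κ]

theorem sum_map_toReal_mul (μ : PMF ι) (G : ι → κ) (f : κ → ℝ) :
    ∑ y, ((μ.map G) y).toReal * f y = ∑ x, (μ x).toReal * f (G x) := by
  have hfib (y : κ) : ((μ.map G) y).toReal = ∑ x with G x = y, (μ x).toReal := by
    rw [PMF.map_apply, tsum_fintype, ← ENNReal.toReal_sum fun x _ => μ.apply_ne_top x,
      Finset.sum_filter]
    simp_rw [eq_comm]
    congr!
  simp_rw [hfib, Finset.sum_mul]
  rw [← Finset.sum_fiberwise Finset.univ G fun x => (μ x).toReal * f (G x)]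
  refine Finset.sum_congr rfl fun y _ => Finset.sum_congr rfl fun x hx => ?_
  rw [(Finset.mem_filter.1 hx).2]

theorem sum_toReal_eq_one (μ : PMF ι) : ∑ x, (μ x).toReal = 1 := by
  rw [← ENNReal.toReal_sum fun x _ => μ.apply_ne_top x, ← tsum_fintype (L := .unconditional _),
    μ.tsum_coe, ENNReal.toReal_one]

end PMF

namespace MvPolynomial

theorem eval_bind₁ {σ τ R : Type*} [CommSemiring R] (f : τ → R)
    (q : σ → MvPolynomial τ R) (p : MvPolynomial σ R) :
    eval f (bind₁ q p) = eval (fun i => eval f (q i)) p :=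
  eval₂Hom_bind₁ _ _ _ _

theorem totalDegree_bind₁_le {σ τ R : Type*} [CommSemiring R]
    {q : σ → MvPolynomial τ R} {c : ℕ} (hq : ∀ i, (q i).totalDegree ≤ c)
    (p : MvPolynomial σ R) : (bind₁ q p).totalDegree ≤ c * p.totalDegree := by
  conv_lhs => rw [p.as_sum, map_sum]
  refine totalDegree_finsetSum_le fun d hd => ?_
  rw [bind₁_monomial]
  refine (totalDegree_mul _ _).trans ?_
  rw [totalDegree_C, zero_add]
  calc (∏ i ∈ d.support, q i ^ d i).totalDegree
      ≤ ∑ i ∈ d.support, (q i ^ d i).totalDegree := totalDegree_finsetProd _ _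
    _ ≤ ∑ i ∈ d.support, c * d i := by
        refine Finset.sum_le_sum fun i _ => (totalDegree_pow _ _).trans ?_
        rw [mul_comm]
        exact Nat.mul_le_mul_right _ (hq i)
    _ = c * ∑ i ∈ d.support, d i := by rw [Finset.mul_sum]
    _ ≤ c * p.totalDegree := Nat.mul_le_mul_left _ (le_totalDegree hd)

end MvPolynomial

section Discrepancy

variable {ι κ : Type*} [Fintype ι] [DecidableEq ι] [Fintype κ] [DecidableEq κ]

theorem abs_pmfExp_le_one (μ : PMF (ι → Bool)) {p : MvPolynomial ι ℝ}
    (hp : ∀ x, |eval (boolToReal x) p| ≤ 1) : |pmfExp μ p| ≤ 1 :=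
  calc |pmfExp μ p| ≤ ∑ x, |(μ x).toReal * eval (boolToReal x) p| :=
        Finset.abs_sum_le_sum_abs _ _
    _ ≤ ∑ x, (μ x).toReal := Finset.sum_le_sum fun x _ => by
        rw [abs_mul, abs_of_nonneg ENNReal.toReal_nonneg]
        exact mul_le_of_le_one_right ENNReal.toReal_nonneg (hp x)
    _ = 1 := μ.sum_toReal_eq_one

theorem le_Deltak {k : ℕ} {μ ν : PMF (ι → Bool)} {p : MvPolynomial ι ℝ}
    (hdeg : p.totalDegree ≤ k) (hp : ∀ x, |eval (boolToReal x) p| ≤ 1) :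
    |pmfExp μ p - pmfExp ν p| ≤ Deltak k μ ν := by
  refine le_csSup ⟨2, ?_⟩ ⟨p, hdeg, hp, rfl⟩
  rintro _ ⟨q, -, hq, rfl⟩
  linarith [abs_sub (pmfExp μ q) (pmfExp ν q), abs_pmfExp_le_one μ hq, abs_pmfExp_le_one ν hq]

theorem Deltak_le {k : ℕ} {μ ν : PMF (ι → Bool)} {D : ℝ}
    (h : ∀ p : MvPolynomial ι ℝ, p.totalDegree ≤ k → (∀ x, |eval (boolToReal x) p| ≤ 1) →
      |pmfExp μ p - pmfExp ν p| ≤ D) :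
    Deltak k μ ν ≤ D := by
  refine csSup_le ⟨_, 0, by simp, by simp, rfl⟩ ?_
  rintro _ ⟨p, hdeg, hp, rfl⟩
  exact h p hdeg hp

theorem Deltak_mono {k₁ k₂ : ℕ} (h : k₁ ≤ k₂) (μ ν : PMF (ι → Bool)) :
    Deltak k₁ μ ν ≤ Deltak k₂ μ ν :=
  Deltak_le fun _ hdeg hp => le_Deltak (hdeg.trans h) hp

theorem Deltak_map_le {G : (ι → Bool) → κ → Bool} {q : κ → MvPolynomial ι ℝ} {c : ℕ}
    (hdeg : ∀ j, (q j).totalDegree ≤ c)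
    (hG : ∀ x j, eval (boolToReal x) (q j) = boolToReal (G x) j) (k : ℕ) (μ ν : PMF (ι → Bool)) :
    Deltak k (μ.map G) (ν.map G) ≤ Deltak (c * k) μ ν := by
  have heval (p : MvPolynomial κ ℝ) (x : ι → Bool) :
      eval (boolToReal x) (bind₁ q p) = eval (boolToReal (G x)) p := by
    rw [eval_bind₁]
    exact congrArg (eval · p) (funext (hG x))
  refine Deltak_le fun p hpdeg hp => ?_
  have hexp (μ : PMF (ι → Bool)) : pmfExp (μ.map G) p = pmfExp μ (bind₁ q p) := by
    simp only [pmfExp, PMF.sum_map_toReal_mul, heval]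
  rw [hexp, hexp]
  exact le_Deltak ((totalDegree_bind₁_le hdeg p).trans (Nat.mul_le_mul_left c hpdeg))
    fun x => (heval p x).symm ▸ hp (G x)

end Discrepancy

noncomputable def indexGadgetPoly (m : ℕ) (j : Fin m) : MvPolynomial (Fin m × Fin 3) ℝ :=
  (1 - X (j, 0)) * X (j, 1) + X (j, 0) * X (j, 2)

theorem totalDegree_indexGadgetPoly_le (m : ℕ) (j : Fin m) :
    (indexGadgetPoly m j).totalDegree ≤ 2 := by
  have hX (i : Fin m × Fin 3) : (X i : MvPolynomial (Fin m × Fin 3) ℝ).totalDegree ≤ 1 :=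
    (totalDegree_X i).le
  have h1 : (1 - X (j, 0) : MvPolynomial (Fin m × Fin 3) ℝ).totalDegree ≤ 1 :=
    (totalDegree_sub _ _).trans (max_le (by simp) (hX _))
  refine (totalDegree_add _ _).trans (max_le ?_ ?_) <;> refine (totalDegree_mul _ _).trans ?_
  · linarith [hX (j, 1)]
  · linarith [hX (j, 0), hX (j, 2)]

theorem eval_indexGadgetPoly (m : ℕ) (x : Fin m × Fin 3 → Bool) (j : Fin m) :
    eval (boolToReal x) (indexGadgetPoly m j) = boolToReal (indexMapBool m x) j := by
  cases h0 : x (j, 0) <;> cases h1 : x (j, 1) <;> cases h2 : x (j, 2) <;>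
    simp [indexGadgetPoly, boolToReal, indexMapBool, h0, h1, h2]

/-- Index monotonicity of the low-degree discrepancy: pushing forward along the
blockwise Index map, degree-`k` discrepancy is controlled by degree-`2k` discrepancy;
equivalently, with `k' = ⌊k/2⌋`, degree-`k'` output discrepancy is at most the
degree-`k` input discrepancy. -/
theorem index_discrepancy_monotone (m : ℕ) (μ ν : PMF (Fin m × Fin 3 → Bool)) :
    ∀ k : ℕ,
      Deltak k (μ.map (indexMapBool m)) (ν.map (indexMapBool m)) ≤ Deltak (2 * k) μ ν ∧
      Deltak (k / 2) (μ.map (indexMapBool m)) (ν.map (indexMapBool m)) ≤ Deltak k μ ν := by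
  have h (k : ℕ) := Deltak_map_le (totalDegree_indexGadgetPoly_le m)
    (eval_indexGadgetPoly m) k μ ν
  exact fun k => ⟨h k, (h (k / 2)).trans (Deltak_mono (by omega) μ ν)⟩
end

section
/- Let P and Q be probability mass functions on a finite type X and let W ⊆ X be a set with P(W) > 0 and Q(W) > 0. Denote by P(·|W) and Q(·|W) the conditional distributions of P and Q given W. Then TV(P(·|W), Q(·|W)) ≤ (TV(P,Q) + (1/2)·|P(W) − Q(W)|) / P(W). -/
open Finset

/-- Total-variation distance between two probability mass functions (given as
nonnegative weight functions) on a finite type. -/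
noncomputable def tvDist {X : Type*} [Fintype X] (P Q : X → ℝ) : ℝ :=
  (1 / 2) * ∑ x, |P x - Q x|

/-- Mass of a set under a probability mass function. -/
noncomputable def massOf {X : Type*} [Fintype X] (P : X → ℝ) (W : Finset X) : ℝ :=
  ∑ x ∈ W, P x

/-- The conditional distribution of `P` given `W`. -/
noncomputable def condOn {X : Type*} [Fintype X] [DecidableEq X]
    (P : X → ℝ) (W : Finset X) : X → ℝ :=
  fun x => if x ∈ W then P x / massOf P W else 0

/-- TV distance of conditional distributions:
`TV(P(·|W), Q(·|W)) ≤ (TV(P,Q) + ½|P(W) − Q(W)|) / P(W)`. -/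
theorem tv_cond_bound {X : Type*} [Fintype X] [DecidableEq X]
    (P Q : X → ℝ) (W : Finset X)
    (hPnn : ∀ x, 0 ≤ P x) (hQnn : ∀ x, 0 ≤ Q x)
    (hP1 : ∑ x, P x = 1) (hQ1 : ∑ x, Q x = 1)
    (hPW : 0 < massOf P W) (hQW : 0 < massOf Q W) :
    tvDist (condOn P W) (condOn Q W) ≤
      (tvDist P Q + (1 / 2) * |massOf P W - massOf Q W|) / massOf P W := by
  set a := massOf P W with ha
  set b := massOf Q W with hb
  have hsum : ∑ x, |condOn P W x - condOn Q W x|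
      = ∑ x ∈ W, |P x / a - Q x / b| := by
    rw [← Finset.sum_filter_add_sum_filter_not Finset.univ (· ∈ W)]
    have h1 : ∀ x ∈ Finset.univ.filter (· ∈ W),
        |condOn P W x - condOn Q W x| = |P x / a - Q x / b| := by
      intro x hx
      simp only [Finset.mem_filter] at hx
      simp [condOn, hx.2, ← ha, ← hb]
    have h2 : ∀ x ∈ Finset.univ.filter (¬ · ∈ W),
        |condOn P W x - condOn Q W x| = 0 := by
      intro x hx
      simp only [Finset.mem_filter] at hx
      simp [condOn, hx.2]
    rw [Finset.sum_congr rfl h1, Finset.sum_congr rfl h2, Finset.sum_const_zero, add_zero]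
    congr 1
    ext x; simp
  have key : ∑ x ∈ W, |P x / a - Q x / b|
      ≤ (∑ x, |P x - Q x|) / a + |a - b| / a := by
    have step : ∑ x ∈ W, |P x / a - Q x / b|
        ≤ ∑ x ∈ W, (|P x - Q x| / a + Q x * (|a - b| / (a * b))) := by
      apply Finset.sum_le_sum
      intro x _
      have : P x / a - Q x / b = (P x - Q x) / a + Q x * ((b - a) / (a * b)) := by
        field_simp; ring
      rw [this]
      calc |(P x - Q x) / a + Q x * ((b - a) / (a * b))|
          ≤ |(P x - Q x) / a| + |Q x * ((b - a) / (a * b))| := abs_add_le _ _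
        _ = |P x - Q x| / a + Q x * (|a - b| / (a * b)) := by
            rw [abs_div, abs_of_pos hPW, abs_mul, abs_of_nonneg (hQnn x), abs_div,
              abs_of_pos (mul_pos hPW hQW), abs_sub_comm b a]
    refine step.trans ?_
    rw [Finset.sum_add_distrib, ← Finset.sum_div, ← Finset.sum_mul]
    have hQb : ∑ x ∈ W, Q x = b := rfl
    rw [hQb]
    have : b * (|a - b| / (a * b)) = |a - b| / a := by
      field_simp
    rw [this]
    gcongr ?_ / a + _ with y
    exact Finset.sum_le_sum_of_subset_of_nonneg (Finset.subset_univ W)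
        (fun x _ _ => abs_nonneg (P x - Q x))
  have h2 : tvDist (condOn P W) (condOn Q W)
      ≤ (1/2) * ((∑ x, |P x - Q x|) / a + |a - b| / a) := by
    rw [tvDist, hsum]
    have : (0:ℝ) < 2 := by norm_num
    nlinarith [key]
  refine h2.trans_eq ?_
  rw [tvDist]
  field_simp
end
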